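/- Let ℓ ≥ 3. A right A-module homomorphism g : P_{ℓ−1} → k_ε satisfies g ∘ d_ℓ = 0 if and only if for every v ∈ V the following four families of identities hold: (1) g^{vᵀ}_{j,i} = −(−1)^ℓ g^{v^σ}_{σ(j),σ(i)} − δ_{j,n}δ_{i,n}( g^v_{1,1} + δ_{ℓ,3} Σ_{s=2}^{n−1} g^v_{s,s} ) for all (j,i) ∈ {1,…,n}² with (j,i) ≠ (1,1); (2) g^{v^δ}_{j,i} = −(−1)^ℓ g^v_{σ(j),σ(i)} − δ_{j,n}δ_{i,n}( g^{v^σ}_{1,1} + δ_{ℓ,3} Σ_{s=2}^{n−1} g^{v^σ}_{s,s} ) for all (j,i) ∈ {1,…,n}² with (j,i) ≠ (1,1); (3) g^{v^δ}_{1,1} = −(−1)^ℓ g^{vᵀ}_{1,1} − (−1)^ℓ g^v_{n,n} + δ_{ℓ,3} Σ_{s=2}^{n−1} g^{v^σ}_{s,s}; (4) g^{v^σ}_{n,n} = −δ_{ℓ,3} Σ_{s=2}^{n−1} g^{v^σ}_{s,s} + (−1)^ℓ ( g^v_{n,n} + δ_{ℓ,3} Σ_{s=2}^{n−1} g^v_{s,s}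 ). Moreover, if (1)–(4) hold for one particular v ∈ V, then they hold for every v ∈ V. -/

import Mathlib

/-!
Common setting (from the paper "The Anick resolution of the co-unit of the free unitary
quantum group", arXiv:2403.06663):

`k` is a field and `n ≥ 2`.  `S` is the set of `2n²` generators `u∘_{j,i}, u•_{j,i}`,
`(j,i) ∈ {1,…,n}²`, with the involution `*` exchanging `u∘_{j,i}` and `u•_{j,i}`.
Indices are realized `0`-based as elements of `Fin n` (so the index `1` is `fin1 = 0`,
the index `n` is `finN = n-1`, and `σ(i) = n-i+1` is `Fin.rev`).
-/

namespace UnPlusAnick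

/-- A generator: a color (`false` = white `∘`, `true` = black `•`) and a pair of indices. -/
abbrev Gen (n : ℕ) := Bool × Fin n × Fin n

/-- The involution `*` on the generators: it flips the color and keeps the indices. -/
def genStar {n : ℕ} (g : Gen n) : Gen n := (!g.1, g.2)

/-- An `n × n` matrix with entries in the set of generators. -/
abbrev Mat (n : ℕ) := Fin n → Fin n → Gen n

/-- The fundamental matrix `u`, `u_{j,i} = u∘_{j,i}`. -/
def uMat (n : ℕ) : Mat n := fun j i => (false, j, i)

/-- The transpose `vᵀ`. -/
def mT {n : ℕ} (v : Mat n) : Mat n := fun j i => v i j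

/-- The matrix `v^σ`, `(v^σ)_{j,i} = (v_{σ(j),σ(i)})^*`. -/
def mS {n : ℕ} (v : Mat n) : Mat n := fun j i => genStar (v j.rev i.rev)

/-- The matrix `v^δ`, `(v^δ)_{j,i} = (v_{σ(i),σ(j)})^*`; thus `v^δ = (v^σ)ᵀ`. -/
def mD {n : ℕ} (v : Mat n) : Mat n := fun j i => genStar (v i.rev j.rev)

/-- The set `V = {u, uᵀ, u^σ, u^δ}`. -/
def V (n : ℕ) : Set (Mat n) := {uMat n, mT (uMat n), mS (uMat n), mD (uMat n)}

/-- The index `1` of `{1, …, n}`, as the `0`-based element `0` of `Fin n`. -/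
def fin1 (n : ℕ) (hn : 2 ≤ n) : Fin n := ⟨0, by omega⟩

/-- The index `n` of `{1, …, n}`, as the `0`-based element `n - 1` of `Fin n`. -/
def finN (n : ℕ) (hn : 2 ≤ n) : Fin n := ⟨n - 1, by omega⟩

theorem genStar_genStar {n : ℕ} (g : Gen n) : genStar (genStar g) = g := by simp [genStar]

theorem mS_mS {n : ℕ} (v : Mat n) : mS (mS v) = v := by
  funext j i; simp [mS, genStar_genStar]

theorem mD_mD {n : ℕ} (v : Mat n) : mD (mD v) = v := by
  funext j i; simp [mD, genStar_genStar]

theorem mS_mD {n : ℕ} (v : Mat n) : mS (mD v) = mT v := by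
  funext j i; simp [mS, mD, mT, genStar_genStar]

theorem mD_mS {n : ℕ} (v : Mat n) : mD (mS v) = mT v := by
  funext j i; simp [mS, mD, mT, genStar_genStar]

/-- `V` is closed under transposition. -/
theorem V_mT {n : ℕ} {v : Mat n} (hv : v ∈ V n) : mT v ∈ V n := by
  simp only [V, Set.mem_insert_iff, Set.mem_singleton_iff] at hv ⊢
  rcases hv with rfl | rfl | rfl | rfl
  · exact Or.inr (Or.inl rfl)
  · exact Or.inl rfl
  · exact Or.inr (Or.inr (Or.inr rfl))
  · exact Or.inr (Or.inr (Or.inl rfl))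

/-- `V` is closed under `v ↦ v^σ`. -/
theorem V_mS {n : ℕ} {v : Mat n} (hv : v ∈ V n) : mS v ∈ V n := by
  simp only [V, Set.mem_insert_iff, Set.mem_singleton_iff] at hv ⊢
  rcases hv with rfl | rfl | rfl | rfl
  · exact Or.inr (Or.inr (Or.inl rfl))
  · exact Or.inr (Or.inr (Or.inr rfl))
  · exact Or.inl (mS_mS _)
  · exact Or.inr (Or.inl (mS_mD _))

/-- `V` is closed under `v ↦ v^δ`. -/
theorem V_mD {n : ℕ} {v : Mat n} (hv : v ∈ V n) : mD v ∈ V n := by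
  simp only [V, Set.mem_insert_iff, Set.mem_singleton_iff] at hv ⊢
  rcases hv with rfl | rfl | rfl | rfl
  · exact Or.inr (Or.inr (Or.inr rfl))
  · exact Or.inr (Or.inr (Or.inl rfl))
  · exact Or.inr (Or.inl (mD_mS _))
  · exact Or.inl (mD_mD _)

/-! ### Words and the free algebra -/

/-- Words in the generators: the free monoid over the set of generators. -/
abbrev Word (n : ℕ) := FreeMonoid (Gen n)

/-- The free unital associative `k`-algebra on the generators, realized as the monoid algebra
of the free monoid of words; its canonical `k`-basis is the set of words. -/
abbrev FreeAlg (k : Type*) [Field k] (n : ℕ) := MonoidAlgebra k (Word n)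

/-- A word, viewed as a monomial in the free algebra. -/
noncomputable def wd (k : Type*) [Field k] {n : ℕ} (w : Word n) : FreeAlg k n :=
  MonoidAlgebra.of k (Word n) w

/-- The relation `b^v_{j,i} = ∑_{s=1}^{n} v_{j,σ(s)} (v^δ)_{s,σ(i)} − δ_{j,i} · 1`. -/
noncomputable def brel (k : Type*) [Field k] {n : ℕ} (v : Mat n) (j i : Fin n) : FreeAlg k n :=
  (∑ s : Fin n, wd k (FreeMonoid.of (v j s.rev) * FreeMonoid.of (mD v s i.rev)))
    - if j = i then 1 else 0

/-- The set of relations `R = {b^v_{j,i} : v ∈ V, (j,i) ∈ {1,…,n}²}`. -/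
def rels (k : Type*) [Field k] (n : ℕ) : Set (FreeAlg k n) :=
  {x | ∃ v ∈ V n, ∃ j i : Fin n, x = brel k v j i}

/-- `b̃^v = v_{n,n}(v^δ)_{1,1} − ∑_{s=2}^{n} ∑_{t=1}^{n−1} v_{t,σ(s)}(v^δ)_{s,σ(t)} + (n−2)·1`. -/
noncomputable def btil (k : Type*) [Field k] (n : ℕ) (hn : 2 ≤ n) (v : Mat n) : FreeAlg k n :=
  wd k (FreeMonoid.of (v (finN n hn) (finN n hn)) * FreeMonoid.of (mD v (fin1 n hn) (fin1 n hn)))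
    - (∑ s ∈ Finset.univ.filter (fun s : Fin n => s ≠ fin1 n hn),
        ∑ t ∈ Finset.univ.filter (fun t : Fin n => t ≠ finN n hn),
          wd k (FreeMonoid.of (v t s.rev) * FreeMonoid.of (mD v s t.rev)))
    + ((n - 2 : ℕ) : FreeAlg k n)

/-! ### The monomial order and tips -/

/-- The strict order on the generators: every black generator is smaller than every white one;
`u•_{t,s} < u•_{j,i}` iff `(j,i) <` `(t,s)` lexicographically, and `u∘_{t,s} < u∘_{j,i}` iff
`(t,s) < (j,i)` lexicographically. -/
def genLT {n : ℕ} (g h : Gen n) : Prop :=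
  (g.1 = true ∧ h.1 = false) ∨
    (g.1 = true ∧ h.1 = true ∧ toLex h.2 < toLex g.2) ∨
    (g.1 = false ∧ h.1 = false ∧ toLex g.2 < toLex h.2)

/-- The degreewise lexicographic extension of the order on generators to words:
`w ≤ w'` iff `w = w'`, or `w` is shorter than `w'`, or they have the same length and `w`
precedes `w'` lexicographically letter by letter. -/
def wordLE {n : ℕ} (w w' : Word n) : Prop :=
  w = w' ∨ (FreeMonoid.toList w).length < (FreeMonoid.toList w').length ∨
    ((FreeMonoid.toList w).length = (FreeMonoid.toList w').length ∧
      List.Lex genLT (FreeMonoid.toList w) (FreeMonoid.toList w'))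

/-- `IsTip f t`: the word `t` is the `≤`-largest word occurring with nonzero coefficient in
`f`, i.e. `Tip(f) = t`. -/
def IsTip (k : Type*) [Field k] {n : ℕ} (f : FreeAlg k n) (t : Word n) : Prop :=
  f.coeff t ≠ 0 ∧ ∀ w : Word n, f.coeff w ≠ 0 → wordLE w t

/-- `w` divides `w'` (as words in the free monoid). -/
def WDvd {n : ℕ} (w w' : Word n) : Prop := ∃ w₁ w₂ : Word n, w' = w₁ * w * w₂

/-! ### The ideal of relations -/

/-- The two-sided ideal `I` of the free algebra generated by the set of relations `R`. -/
noncomputable def idl (k : Type*) [Field k] (n : ℕ) : TwoSidedIdeal (FreeAlg k n) :=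
  TwoSidedIdeal.span (rels k n)

/-- The set `Tip(I)` of tips of nonzero elements of `I`. -/
def TipSet (k : Type*) [Field k] (n : ℕ) : Set (Word n) :=
  {w | ∃ f : FreeAlg k n, f ∈ idl k n ∧ f ≠ 0 ∧ IsTip k f w}

/-! ### Reductions and ambiguities -/

/-- `φ` is a one-step reduction by `f`: there are fixed words `w₁`, `w₂` such that `φ` maps the
word `w₁ Tip(f) w₂` to `w₁ (Tip(f) − c⁻¹ f) w₂`, where `c` is the leading coefficient of `f`,
and fixes every other word. -/
def IsOneStep (k : Type*) [Field k] {n : ℕ} (f : FreeAlg k n)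
    (φ : FreeAlg k n →ₗ[k] FreeAlg k n) : Prop :=
  f ≠ 0 ∧ ∃ (w₁ w₂ t : Word n), IsTip k f t ∧
    φ (wd k (w₁ * t * w₂)) = wd k w₁ * (wd k t - (f.coeff t)⁻¹ • f) * wd k w₂ ∧
    ∀ w : Word n, w ≠ w₁ * t * w₂ → φ (wd k w) = wd k w

/-- A reduction by a set `G`: a finite composition of one-step reductions by nonzero elements
of `G`. -/
inductive IsReduction (k : Type*) [Field k] {n : ℕ} (G : Set (FreeAlg k n)) :
    (FreeAlg k n →ₗ[k] FreeAlg k n) → Prop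
  | id : IsReduction k G LinearMap.id
  | comp {φ ψ : FreeAlg k n →ₗ[k] FreeAlg k n} {g : FreeAlg k n} (hg : g ∈ G)
      (hφ : IsOneStep k g φ) (hψ : IsReduction k G ψ) : IsReduction k G (φ ∘ₗ ψ)

/-- `(g, g', w₁, w₂)` is an inclusion ambiguity of `G`. -/
def IsInclusionAmbiguity (k : Type*) [Field k] {n : ℕ} (G : Set (FreeAlg k n))
    (g g' : FreeAlg k n) (w₁ w₂ : Word n) : Prop :=
  g ∈ G ∧ g' ∈ G ∧ g ≠ 0 ∧ g' ≠ 0 ∧ g ≠ g' ∧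
    ∃ t t' : Word n, IsTip k g t ∧ IsTip k g' t' ∧ w₁ * t * w₂ = t'

/-- The inclusion ambiguity `(g, g', w₁, w₂)` of `G` resolves. -/
def InclusionAmbiguityResolves (k : Type*) [Field k] {n : ℕ} (G : Set (FreeAlg k n))
    (g g' : FreeAlg k n) (w₁ w₂ : Word n) : Prop :=
  ∀ t t' : Word n, IsTip k g t → IsTip k g' t' →
    ∃ φ₁ φ₂ : FreeAlg k n →ₗ[k] FreeAlg k n, IsReduction k G φ₁ ∧ IsReduction k G φ₂ ∧
      φ₁ (wd k t' - (g'.coeff t')⁻¹ • g') = φ₂ (wd k w₁ * (wd k t - (g.coeff t)⁻¹ • g) * wd k w₂)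

/-- `(g₁, g₂, w₁, w₂)` is an overlap ambiguity of `G`. -/
def IsOverlapAmbiguity (k : Type*) [Field k] {n : ℕ} (G : Set (FreeAlg k n))
    (g₁ g₂ : FreeAlg k n) (w₁ w₂ : Word n) : Prop :=
  g₁ ∈ G ∧ g₂ ∈ G ∧ g₁ ≠ 0 ∧ g₂ ≠ 0 ∧ ¬(w₁ = 1 ∧ w₂ = 1) ∧
    ∃ t₁ t₂ : Word n, IsTip k g₁ t₁ ∧ IsTip k g₂ t₂ ∧ t₁ * w₂ = w₁ * t₂ ∧
      ¬WDvd t₂ w₂ ∧ ¬WDvd t₁ w₁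

/-- The overlap ambiguity `(g₁, g₂, w₁, w₂)` of `G` resolves. -/
def OverlapAmbiguityResolves (k : Type*) [Field k] {n : ℕ} (G : Set (FreeAlg k n))
    (g₁ g₂ : FreeAlg k n) (w₁ w₂ : Word n) : Prop :=
  ∀ t₁ t₂ : Word n, IsTip k g₁ t₁ → IsTip k g₂ t₂ →
    ∃ φ₁ φ₂ : FreeAlg k n →ₗ[k] FreeAlg k n, IsReduction k G φ₁ ∧ IsReduction k G φ₂ ∧
      φ₁ ((wd k t₁ - (g₁.coeff t₁)⁻¹ • g₁) * wd k w₂) = φ₂ (wd k w₁ * (wd k t₂ - (g₂.coeff t₂)⁻¹ • g₂))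

/-! ### Gröbner bases -/

/-- `G` is a Gröbner basis of the two-sided ideal `J` with respect to the order: `G ⊆ J` and
the tip of every nonzero element of `J` is divisible by the tip of some nonzero element
of `G`. -/
def IsGroebner (k : Type*) [Field k] {n : ℕ} (G : Set (FreeAlg k n))
    (J : TwoSidedIdeal (FreeAlg k n)) : Prop :=
  (∀ g ∈ G, g ∈ J) ∧
    ∀ f : FreeAlg k n, f ∈ J → f ≠ 0 → ∀ t : Word n, IsTip k f t →
      ∃ g ∈ G, g ≠ 0 ∧ ∃ tg : Word n, IsTip k g tg ∧ WDvd tg t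

/-- A minimal Gröbner basis: `0 ∉ G` and the tip of no element of `G` divides the tip of a
different element of `G`. -/
def IsMinimalGroebner (k : Type*) [Field k] {n : ℕ} (G : Set (FreeAlg k n))
    (J : TwoSidedIdeal (FreeAlg k n)) : Prop :=
  IsGroebner k G J ∧ (0 : FreeAlg k n) ∉ G ∧
    ∀ g ∈ G, ∀ g' ∈ G, g ≠ g' → ∀ t t' : Word n, IsTip k g t → IsTip k g' t' → ¬WDvd t t'

/-- A reduced Gröbner basis: minimal, every element has leading coefficient `1`, and the tip of
no element of `G` divides a word occurring with nonzero coefficient in a different element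
of `G`. -/
def IsReducedGroebner (k : Type*) [Field k] {n : ℕ} (G : Set (FreeAlg k n))
    (J : TwoSidedIdeal (FreeAlg k n)) : Prop :=
  IsMinimalGroebner k G J ∧ (∀ g ∈ G, ∀ t : Word n, IsTip k g t → g.coeff t = 1) ∧
    ∀ g ∈ G, ∀ g' ∈ G, g ≠ g' → ∀ t : Word n, IsTip k g t →
      ∀ w : Word n, g'.coeff w ≠ 0 → ¬WDvd t w

/-! ### Monoidal ideals -/

/-- A monoidal ideal of the free monoid of words: a set of words containing all multiples of
its elements. -/
def IsMonIdeal {n : ℕ} (M : Set (Word n)) : Prop :=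
  ∀ w ∈ M, ∀ w₁ w₂ : Word n, w₁ * w * w₂ ∈ M

/-- `N` generates `M` as a monoidal ideal: `M` is the smallest monoidal ideal containing `N`. -/
def GeneratesMonIdeal {n : ℕ} (N M : Set (Word n)) : Prop :=
  IsMonIdeal M ∧ N ⊆ M ∧ ∀ M' : Set (Word n), IsMonIdeal M' → N ⊆ M' → M ⊆ M'

/-! ### Chain words -/

/-- `v^{[ℓ]}`: equal to `v` for odd `ℓ` and to `v^δ` for even `ℓ`. -/
def pw {n : ℕ} (l : ℕ) (v : Mat n) : Mat n := if l % 2 = 1 then v else mD v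

/-- The word `v^{(ℓ)}_{j,i}` (for `ℓ ≥ 1`). -/
def chainWord (n : ℕ) (hn : 2 ≤ n) (v : Mat n) (l : ℕ) (j i : Fin n) : Word n :=
  if l = 1 then FreeMonoid.of (v j i.rev)
  else if l % 2 = 0 then
    FreeMonoid.of (v j (finN n hn)) *
      (FreeMonoid.of (mD v (fin1 n hn) (finN n hn)) *
          FreeMonoid.of (v (fin1 n hn) (finN n hn))) ^ ((l - 2) / 2) *
      FreeMonoid.of (mD v (fin1 n hn) i.rev)
  else
    FreeMonoid.of (v j (finN n hn)) *
      (FreeMonoid.of (mD v (fin1 n hn) (finN n hn)) *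
          FreeMonoid.of (v (fin1 n hn) (finN n hn))) ^ ((l - 3) / 2) *
      FreeMonoid.of (mD v (fin1 n hn) (finN n hn)) * FreeMonoid.of (v (fin1 n hn) i.rev)

/-- The set `C_ℓ = {v^{(ℓ)}_{j,i} : v ∈ V, (j,i) ∈ {1,…,n}²}` of `ℓ`-chains. -/
def Cset (n : ℕ) (hn : 2 ≤ n) (l : ℕ) : Set (Word n) :=
  {w | ∃ v ∈ V n, ∃ j i : Fin n, w = chainWord n hn v l j i}

/-! ### The quotient algebra `A = F/I`, the counit and the modules of the resolution -/

/-- The relation identifying each element of `R` with `0`; the induced ring congruence realizes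
the quotient `A = F/I` by the two-sided ideal `I` generated by `R`. -/
def relR (k : Type*) [Field k] (n : ℕ) : FreeAlg k n → FreeAlg k n → Prop :=
  fun a b => a ∈ rels k n ∧ b = 0

/-- The `k`-algebra `A = F/I`. -/
abbrev Aq (k : Type*) [Field k] (n : ℕ) := RingQuot (relR k n)

/-- The quotient map `F → A = F/I`. -/
noncomputable def pr (k : Type*) [Field k] (n : ℕ) : FreeAlg k n →ₐ[k] Aq k n :=
  RingQuot.mkAlgHom k (relR k n)

/-- The class `v_{j,i} + I ∈ A` of a generator. -/
noncomputable def gen (k : Type*) [Field k] {n : ℕ} (v : Mat n) (j i : Fin n) : Aq k n :=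
  pr k n (wd k (FreeMonoid.of (v j i)))

/-- The ring homomorphism `Aᵐᵒᵖ →+* k` induced by `ε` (using the commutativity of `k`). -/
noncomputable def epsOp (k : Type*) [Field k] (n : ℕ) (ε : Aq k n →ₐ[k] k) :
    (Aq k n)ᵐᵒᵖ →+* k where
  toFun a := ε a.unop
  map_one' := by simp
  map_mul' a b := by simp [mul_comm]
  map_zero' := by simp
  map_add' a b := by simp

/-- The right `A`-module `k_ε`: the field `k` with the right `A`-action induced by `ε`,
realized as a left module over the opposite algebra `Aᵐᵒᵖ`. -/
def KE (k : Type*) [Field k] (n : ℕ) (_ε : Aq k n →ₐ[k] k) : Type _ := k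

instance (k : Type*) [Field k] (n : ℕ) (ε : Aq k n →ₐ[k] k) : AddCommGroup (KE k n ε) :=
  inferInstanceAs (AddCommGroup k)

instance (k : Type*) [Field k] (n : ℕ) (ε : Aq k n →ₐ[k] k) : Module k (KE k n ε) :=
  inferInstanceAs (Module k k)

instance (k : Type*) [Field k] (n : ℕ) (ε : Aq k n →ₐ[k] k) : One (KE k n ε) := ⟨(1 : k)⟩

noncomputable instance (k : Type*) [Field k] (n : ℕ) (ε : Aq k n →ₐ[k] k) :
    Module ((Aq k n)ᵐᵒᵖ) (KE k n ε) :=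
  Module.compHom k (epsOp k n ε)

instance (k : Type*) [Field k] (n : ℕ) (ε : Aq k n →ₐ[k] k) :
    SMulCommClass ((Aq k n)ᵐᵒᵖ) k (KE k n ε) :=
  ⟨fun a c x => by
    show epsOp k n ε a • (c • x) = c • (epsOp k n ε a • x)
    rw [smul_smul, smul_smul, mul_comm]⟩

/-- The free right `A`-module `P_ℓ = kC_ℓ ⊗ₖ A` with basis `C_ℓ` (for `ℓ ≥ 1`), realized as a
left module over the opposite algebra `Aᵐᵒᵖ`. -/
abbrev Pmod (k : Type*) [Field k] (n : ℕ) (hn : 2 ≤ n) (l : ℕ) :=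
  ↥(Cset n hn l) →₀ Aq k n

/-- The element `v^{(ℓ)}_{j,i} ⊗ a` of `P_ℓ`. -/
noncomputable def bas (k : Type*) [Field k] (n : ℕ) (hn : 2 ≤ n) (l : ℕ) (v : Mat n)
    (hv : v ∈ V n) (j i : Fin n) (a : Aq k n) : Pmod k n hn l :=
  Finsupp.single ⟨chainWord n hn v l j i, ⟨v, hv, j, i, rfl⟩⟩ a

/-- Pre-composition with a homomorphism of right `A`-modules, as the `k`-linear map
`Hom_A(N, k_ε) → Hom_A(M, k_ε)`, `g ↦ g ∘ d`. -/
noncomputable def homMap (k : Type*) [Field k] {n : ℕ} (ε : Aq k n →ₐ[k] k) {M N : Type*}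
    [AddCommMonoid M] [AddCommMonoid N] [Module ((Aq k n)ᵐᵒᵖ) M] [Module ((Aq k n)ᵐᵒᵖ) N]
    (d : M →ₗ[(Aq k n)ᵐᵒᵖ] N) :
    (N →ₗ[(Aq k n)ᵐᵒᵖ] KE k n ε) →ₗ[k] (M →ₗ[(Aq k n)ᵐᵒᵖ] KE k n ε) where
  toFun g := g.comp d
  map_add' _ _ := LinearMap.ext fun _ => rfl
  map_smul' _ _ := LinearMap.ext fun _ => rfl

/-- The right-hand side of the defining formula for `d₂` on the basis element
`v^{(2)}_{j,i} ⊗ 1`. -/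
noncomputable def d2RHS (k : Type*) [Field k] (n : ℕ) (hn : 2 ≤ n) (v : Mat n)
    (hv : v ∈ V n) (j i : Fin n) : Pmod k n hn 1 :=
  (∑ s : Fin n, bas k n hn 1 v hv j s (gen k (mD v) s i.rev))
    + bas k n hn 1 (mD v) (V_mD hv) j.rev i 1
    - (if j = finN n hn ∧ i = finN n hn then
        ∑ s ∈ Finset.univ.filter (fun s : Fin n => s ≠ fin1 n hn),
          ((∑ t : Fin n, bas k n hn 1 v hv t s (gen k (mD v) s t.rev))
            + bas k n hn 1 (mD v) (V_mD hv) s s.rev 1)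
      else 0)

/-- The right-hand side of the defining formula for `d_ℓ`, `ℓ ≥ 3`, on the basis element
`v^{(ℓ)}_{j,i} ⊗ 1`. -/
noncomputable def dTail (k : Type*) [Field k] (n : ℕ) (hn : 2 ≤ n) (l : ℕ) (v : Mat n)
    (hv : v ∈ V n) (j i : Fin n) : Pmod k n hn (l - 1) :=
  (∑ s : Fin n, bas k n hn (l - 1) v hv j s (gen k (pw l v) s i.rev))
    + bas k n hn (l - 1) (mD v) (V_mD hv) j.rev i ((-1 : Aq k n) ^ l)
    + (if j = finN n hn then
        ((bas k n hn (l - 1) (mT v) (V_mT hv) (fin1 n hn) (fin1 n hn)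
              (gen k (pw l (mT v)) i.rev (finN n hn))
            + (if l = 3 then
                ∑ s ∈ Finset.univ.filter (fun s : Fin n => s ≠ fin1 n hn ∧ s ≠ finN n hn),
                  bas k n hn (l - 1) (mT v) (V_mT hv) s s (gen k (pw l (mT v)) i.rev (finN n hn))
              else 0))
          - (if i = finN n hn then
              (∑ s : Fin n, bas k n hn (l - 1) (mT v) (V_mT hv) (fin1 n hn) s
                  (gen k (pw l (mT v)) s (finN n hn)))
                + bas k n hn (l - 1) (mS v) (V_mS hv) (finN n hn) (fin1 n hn) ((-1 : Aq k n) ^ l)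
            else 0))
      else 0)
    + (if j = fin1 n hn ∧ i = finN n hn then
        bas k n hn (l - 1) (mS v) (V_mS hv) (fin1 n hn) (fin1 n hn) ((-1 : Aq k n) ^ l)
          + (if l = 3 then
              ∑ s ∈ Finset.univ.filter (fun s : Fin n => s ≠ fin1 n hn ∧ s ≠ finN n hn),
                bas k n hn (l - 1) (mS v) (V_mS hv) s s ((-1 : Aq k n) ^ l)
            else 0)
      else 0)

/-- The system of identities from STATEMENT 14, for a fixed `v ∈ V`. -/
noncomputable def cond14 (k : Type*) [Field k] {n : ℕ} (hn : 2 ≤ n) (ε : Aq k n →ₐ[k] k)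
    (g : Pmod k n hn 1 →ₗ[(Aq k n)ᵐᵒᵖ] KE k n ε) (v : Mat n) (hv : v ∈ V n) : Prop :=
  ∀ j i : Fin n, g (bas k n hn 1 (mS v) (V_mS hv) j i 1) = -g (bas k n hn 1 v hv i j 1)

/-- The system of identities (1)–(4) from STATEMENT 16, for a fixed `v ∈ V`. -/
noncomputable def cond16 (k : Type*) [Field k] {n : ℕ} (hn : 2 ≤ n) (ε : Aq k n →ₐ[k] k)
    (l : ℕ) (g : Pmod k n hn (l - 1) →ₗ[(Aq k n)ᵐᵒᵖ] KE k n ε) (v : Mat n)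
    (hv : v ∈ V n) : Prop :=
  (∀ j i : Fin n, (j, i) ≠ (fin1 n hn, fin1 n hn) →
      g (bas k n hn (l - 1) (mT v) (V_mT hv) j i 1) =
        -(((-1 : k) ^ l) • g (bas k n hn (l - 1) (mS v) (V_mS hv) j.rev i.rev 1))
          - (if j = finN n hn ∧ i = finN n hn then
              g (bas k n hn (l - 1) v hv (fin1 n hn) (fin1 n hn) 1)
                + (if l = 3 then
                    ∑ s ∈ Finset.univ.filter (fun s : Fin n => s ≠ fin1 n hn ∧ s ≠ finN n hn),
                      g (bas k n hn (l - 1) v hv s s 1)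
                  else 0)
            else 0)) ∧
  (∀ j i : Fin n, (j, i) ≠ (fin1 n hn, fin1 n hn) →
      g (bas k n hn (l - 1) (mD v) (V_mD hv) j i 1) =
        -(((-1 : k) ^ l) • g (bas k n hn (l - 1) v hv j.rev i.rev 1))
          - (if j = finN n hn ∧ i = finN n hn then
              g (bas k n hn (l - 1) (mS v) (V_mS hv) (fin1 n hn) (fin1 n hn) 1)
                + (if l = 3 then
                    ∑ s ∈ Finset.univ.filter (fun s : Fin n => s ≠ fin1 n hn ∧ s ≠ finN n hn),
                      g (bas k n hn (l - 1) (mS v) (V_mS hv) s s 1)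
                  else 0)
            else 0)) ∧
  (g (bas k n hn (l - 1) (mD v) (V_mD hv) (fin1 n hn) (fin1 n hn) 1) =
      -(((-1 : k) ^ l) • g (bas k n hn (l - 1) (mT v) (V_mT hv) (fin1 n hn) (fin1 n hn) 1))
        - ((-1 : k) ^ l) • g (bas k n hn (l - 1) v hv (finN n hn) (finN n hn) 1)
        + (if l = 3 then
            ∑ s ∈ Finset.univ.filter (fun s : Fin n => s ≠ fin1 n hn ∧ s ≠ finN n hn),
              g (bas k n hn (l - 1) (mS v) (V_mS hv) s s 1)
          else 0)) ∧
  (g (bas k n hn (l - 1) (mS v) (V_mS hv) (finN n hn) (finN n hn) 1) =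
      -(if l = 3 then
          ∑ s ∈ Finset.univ.filter (fun s : Fin n => s ≠ fin1 n hn ∧ s ≠ finN n hn),
            g (bas k n hn (l - 1) (mS v) (V_mS hv) s s 1)
        else 0)
        + ((-1 : k) ^ l) • (g (bas k n hn (l - 1) v hv (finN n hn) (finN n hn) 1)
            + (if l = 3 then
                ∑ s ∈ Finset.univ.filter (fun s : Fin n => s ≠ fin1 n hn ∧ s ≠ finN n hn),
                  g (bas k n hn (l - 1) v hv s s 1)
              else 0)))



/-!
Evaluated through `ε`, every coefficient `v_{s,t} + I` in `d_ℓ` becomes a Kronecker delta, so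
`g ∘ d_ℓ = 0` is a linear system in the values of `g` on the bases `v^{(ℓ−1)}_{j,i}`: one block
`CocycleEqs` for each `v ∈ V`, involving only the values along `v, vᵀ, v^σ, v^δ`. The operations
`ᵀ, σ, δ` generate a Klein four-group of which `V` is a single orbit, so for every `w ∈ V` the
whole system is the four blocks of `w, wᵀ, w^σ, w^δ`. The blocks of `v` and `v^δ` agree after the
substitution `(j, i) ↦ (σ j, σ i)` and multiplication by `(-1)^ℓ`, except at one corner each;
comparing the two corners kills the discrepancy and merges them into one family `PairedEqs`.
The two families so obtained are, after solving their `(1,1)` entries, the identities (1)–(4)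
for `w`.
-/

theorem rev_fin1 {n : ℕ} (hn : 2 ≤ n) : (fin1 n hn).rev = finN n hn := by
  ext; simp [fin1, finN, Fin.val_rev]

theorem rev_finN {n : ℕ} (hn : 2 ≤ n) : (finN n hn).rev = fin1 n hn := by
  rw [← rev_fin1 hn, Fin.rev_rev]

theorem fin1_ne_finN {n : ℕ} (hn : 2 ≤ n) : fin1 n hn ≠ finN n hn := by
  simp [fin1, finN, Fin.ext_iff]; omega

@[simp]
theorem rev_eq_finN_iff {n : ℕ} (hn : 2 ≤ n) {i : Fin n} : i.rev = finN n hn ↔ i = fin1 n hn := by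
  rw [← rev_fin1 hn, Fin.rev_inj]

@[simp]
theorem rev_eq_fin1_iff {n : ℕ} (hn : 2 ≤ n) {i : Fin n} : i.rev = fin1 n hn ↔ i = finN n hn := by
  rw [← rev_finN hn, Fin.rev_inj]

theorem mT_mT {n : ℕ} (v : Mat n) : mT (mT v) = v := rfl
theorem mS_mT {n : ℕ} (v : Mat n) : mS (mT v) = mD v := rfl
theorem mD_mT {n : ℕ} (v : Mat n) : mD (mT v) = mS v := rfl
theorem mT_mS {n : ℕ} (v : Mat n) : mT (mS v) = mD v := rfl
theorem mT_mD {n : ℕ} (v : Mat n) : mT (mD v) = mS v := rfl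

theorem V_eq_of_mem {n : ℕ} {w : Mat n} (hw : w ∈ V n) : V n = {w, mT w, mS w, mD w} := by
  simp only [V, Set.mem_insert_iff, Set.mem_singleton_iff] at hw
  ext v
  rcases hw with rfl | rfl | rfl | rfl <;>
    simp only [V, Set.mem_insert_iff, Set.mem_singleton_iff, mT_mT, mS_mT, mD_mT, mT_mS, mT_mD,
      mS_mS, mD_mD, mS_mD, mD_mS] <;>
    tauto

theorem pw_mem {n l : ℕ} {v : Mat n} (hv : v ∈ V n) : pw l v ∈ V n := by
  unfold pw
  split_ifs
  exacts [hv, V_mD hv]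

section LinearSystem

variable {R M : Type*} [Ring R] [AddCommGroup M] [Module R M] {n : ℕ} (l : ℕ) (hn : 2 ≤ n)
  (e : R)

def diagSum (f : Fin n → Fin n → M) : M :=
  if l = 3 then
    ∑ s ∈ Finset.univ.filter (fun s : Fin n => s ≠ fin1 n hn ∧ s ≠ finN n hn), f s s
  else 0

variable {l hn e}

theorem diagSum_eq_neg_smul {x y : Fin n → Fin n → M}
    (h : ∀ s, s ≠ fin1 n hn → s ≠ finN n hn → x s s = -(e • y s.rev s.rev)) :
    diagSum l hn x = -(e • diagSum l hn y) := by
  unfold diagSum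
  split_ifs
  · rw [Finset.sum_congr rfl fun s hs =>
        h s (Finset.mem_filter.1 hs).2.1 (Finset.mem_filter.1 hs).2.2, Finset.sum_neg_distrib,
      ← Finset.smul_sum, Finset.sum_filter, Finset.sum_filter]
    congr 2
    exact Fintype.sum_equiv Fin.revPerm _ _ fun s => by simp [and_comm]
  · simp

theorem smul_smul_self (he : e * e = 1) (x : M) : e • e • x = x := by
  rw [smul_smul, he, one_smul]

variable (l hn e)

def pairedTerm (x y p q : Fin n → Fin n → M) (j i : Fin n) : M :=
  x j i + e • y j.rev i.rev
    + (if j = finN n hn ∧ i = finN n hn then p (fin1 n hn) (fin1 n hn) + diagSum l hn p else 0)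
    + (if j = fin1 n hn ∧ i = fin1 n hn then e • (q (fin1 n hn) (fin1 n hn) + diagSum l hn q)
      else 0)

def PairedEqs (x y p q : Fin n → Fin n → M) : Prop :=
  ∀ j i, pairedTerm l hn e x y p q j i = 0

/-- `g ∘ d_ℓ` vanishes on the `v^{(ℓ)}_{j,σ(i)}`, when `a, b, c, d` are the values of `g` along
`v, vᵀ, v^σ, v^δ`. -/
def CocycleEqs (a b c d : Fin n → Fin n → M) : Prop :=
  ∀ j i, pairedTerm l hn e a d b c j i
    - (if j = finN n hn ∧ i = fin1 n hn then
        b (fin1 n hn) (finN n hn) + e • c (finN n hn) (fin1 n hn)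
      else 0) = 0

def Cond16Eqs (a b c d : Fin n → Fin n → M) : Prop :=
  (∀ j i : Fin n, (j, i) ≠ (fin1 n hn, fin1 n hn) →
      b j i = -(e • c j.rev i.rev)
        - (if j = finN n hn ∧ i = finN n hn then a (fin1 n hn) (fin1 n hn) + diagSum l hn a
          else 0)) ∧
  (∀ j i : Fin n, (j, i) ≠ (fin1 n hn, fin1 n hn) →
      d j i = -(e • a j.rev i.rev)
        - (if j = finN n hn ∧ i = finN n hn then c (fin1 n hn) (fin1 n hn) + diagSum l hn c
          else 0)) ∧
  (d (fin1 n hn) (fin1 n hn) = -(e • b (fin1 n hn) (fin1 n hn))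
      - e • a (finN n hn) (finN n hn) + diagSum l hn c) ∧
  (c (finN n hn) (finN n hn) = -diagSum l hn c
      + e • (a (finN n hn) (finN n hn) + diagSum l hn a))

variable {l hn e} {x y p q a b c d : Fin n → Fin n → M}

theorem pairedTerm_rev (he : e * e = 1) (j i : Fin n) :
    pairedTerm l hn e y x q p j.rev i.rev = e • pairedTerm l hn e x y p q j i := by
  simp only [pairedTerm, Fin.rev_rev, rev_eq_finN_iff, rev_eq_fin1_iff, smul_add, smul_ite,
    smul_zero, smul_smul_self he]
  split_ifs <;> abel

theorem pairedEqs_comm (he : e * e = 1) :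
    PairedEqs l hn e y x q p ↔ PairedEqs l hn e x y p q := by
  refine ⟨fun h j i => ?_, fun h j i => ?_⟩
  · rw [← smul_smul_self he (pairedTerm l hn e x y p q j i), ← pairedTerm_rev he, h, smul_zero]
  · rw [← Fin.rev_rev j, ← Fin.rev_rev i, pairedTerm_rev he, h, smul_zero]

theorem PairedEqs.corner (h : PairedEqs l hn e x y p q) :
    x (fin1 n hn) (finN n hn) + e • y (finN n hn) (fin1 n hn) = 0 := by
  simpa [pairedTerm, rev_fin1, rev_finN, fin1_ne_finN hn, (fin1_ne_finN hn).symm] using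
    h (fin1 n hn) (finN n hn)

theorem cocycleEqs_iff_pairedEqs
    (h : b (fin1 n hn) (finN n hn) + e • c (finN n hn) (fin1 n hn) = 0) :
    CocycleEqs l hn e a b c d ↔ PairedEqs l hn e a d b c := by
  simp [CocycleEqs, PairedEqs, h]

theorem corner_of_cocycleEqs (he : e * e = 1) (h : CocycleEqs l hn e a b c d)
    (h' : CocycleEqs l hn e d c b a) :
    b (fin1 n hn) (finN n hn) + e • c (finN n hn) (fin1 n hn) = 0 := by
  have hN1 := h (finN n hn) (fin1 n hn)
  have h1N := h' (fin1 n hn) (finN n hn)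
  rw [if_pos ⟨rfl, rfl⟩, sub_eq_zero] at hN1
  have hrev := pairedTerm_rev (l := l) (hn := hn) (x := a) (y := d) (p := b) (q := c) he
    (finN n hn) (fin1 n hn)
  rw [rev_finN, rev_fin1] at hrev
  rw [if_neg fun h => fin1_ne_finN hn h.1, sub_zero, hrev, hN1] at h1N
  simpa [smul_smul_self he] using congrArg (e • ·) h1N

theorem cocycleEqs_four_iff (he : e * e = 1) :
    (CocycleEqs l hn e a b c d ∧ CocycleEqs l hn e b a d c ∧ CocycleEqs l hn e c d a b ∧
        CocycleEqs l hn e d c b a) ↔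
      PairedEqs l hn e b c a d ∧ PairedEqs l hn e d a c b := by
  constructor
  · rintro ⟨habcd, hbadc, hcdab, hdcba⟩
    exact ⟨(cocycleEqs_iff_pairedEqs (corner_of_cocycleEqs he hbadc hcdab)).1 hbadc,
      (cocycleEqs_iff_pairedEqs (corner_of_cocycleEqs he hdcba habcd)).1 hdcba⟩
  · rintro ⟨hbcad, hdacb⟩
    have hcbda := (pairedEqs_comm he).2 hbcad
    have hadbc := (pairedEqs_comm he).2 hdacb
    exact ⟨(cocycleEqs_iff_pairedEqs hbcad.corner).2 hadbc,
      (cocycleEqs_iff_pairedEqs hadbc.corner).2 hbcad,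
      (cocycleEqs_iff_pairedEqs hdacb.corner).2 hcbda,
      (cocycleEqs_iff_pairedEqs hcbda.corner).2 hdacb⟩

theorem pairedEqs_iff :
    PairedEqs l hn e x y p q ↔
      (∀ j i : Fin n, (j, i) ≠ (fin1 n hn, fin1 n hn) →
        x j i = -(e • y j.rev i.rev)
          - (if j = finN n hn ∧ i = finN n hn then p (fin1 n hn) (fin1 n hn) + diagSum l hn p
            else 0)) ∧
      x (fin1 n hn) (fin1 n hn) + e • y (finN n hn) (finN n hn)
        + e • (q (fin1 n hn) (fin1 n hn) + diagSum l hn q) = 0 := by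
  have h1N := fin1_ne_finN hn
  constructor
  · intro h
    refine ⟨fun j i hji => ?_, ?_⟩
    · have := h j i
      rw [pairedTerm, if_neg (show ¬(j = fin1 n hn ∧ i = fin1 n hn) by
        simpa [Prod.ext_iff] using hji), add_zero] at this
      rwa [eq_sub_iff_add_eq, eq_neg_iff_add_eq_zero, add_right_comm]
    · simpa [pairedTerm, rev_fin1, h1N] using h (fin1 n hn) (fin1 n hn)
  · rintro ⟨hne, h11⟩ j i
    by_cases hji : (j, i) = (fin1 n hn, fin1 n hn)
    · obtain ⟨rfl, rfl⟩ := Prod.ext_iff.1 hji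
      simpa [pairedTerm, rev_fin1, h1N] using h11
    · rw [pairedTerm, if_neg (show ¬(j = fin1 n hn ∧ i = fin1 n hn) by
        simpa [Prod.ext_iff] using hji), add_zero, hne j i hji]
      abel

theorem diagSum_eq_neg_smul_of_forall_ne
    (h : ∀ j i : Fin n, (j, i) ≠ (fin1 n hn, fin1 n hn) →
      x j i = -(e • y j.rev i.rev)
        - (if j = finN n hn ∧ i = finN n hn then p (fin1 n hn) (fin1 n hn) + diagSum l hn p
          else 0)) :
    diagSum l hn x = -(e • diagSum l hn y) :=
  diagSum_eq_neg_smul fun s h1 hN => by simpa [hN] using h s s (by simp [h1])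

theorem cond16Eqs_iff (he : e * e = 1) :
    Cond16Eqs l hn e a b c d ↔ PairedEqs l hn e b c a d ∧ PairedEqs l hn e d a c b := by
  rw [pairedEqs_iff, pairedEqs_iff]
  constructor
  · rintro ⟨hb, hd, hd11, hcNN⟩
    have hsumB := diagSum_eq_neg_smul_of_forall_ne hb
    have hsumD := diagSum_eq_neg_smul_of_forall_ne hd
    refine ⟨⟨hb, ?_⟩, hd, ?_⟩
    · rw [hd11, hcNN, hsumD]
      simp only [smul_add, smul_sub, smul_neg, smul_smul_self he]
      abel
    · rw [hd11, hsumB]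
      simp only [smul_add, smul_neg, smul_smul_self he]
      abel
  · rintro ⟨⟨hb, hb11⟩, hd, hd11⟩
    have hsumB := diagSum_eq_neg_smul_of_forall_ne hb
    have hsumD := diagSum_eq_neg_smul_of_forall_ne hd
    have hd11' : d (fin1 n hn) (fin1 n hn) = -(e • b (fin1 n hn) (fin1 n hn))
        - e • a (finN n hn) (finN n hn) + diagSum l hn c := by
      refine sub_eq_zero.1 (.trans ?_ hd11)
      rw [hsumB]
      simp only [smul_add, smul_neg, smul_smul_self he]
      abel
    refine ⟨hb, hd, hd11', sub_eq_zero.1 ?_⟩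
    calc _ = e • (b (fin1 n hn) (fin1 n hn) + e • c (finN n hn) (finN n hn)
          + e • (d (fin1 n hn) (fin1 n hn) + diagSum l hn d)) := by
          rw [hd11', hsumD]
          simp only [smul_add, smul_sub, smul_neg, smul_smul_self he]
          abel
      _ = 0 := by rw [hb11, smul_zero]

end LinearSystem

section Cochains

variable {k : Type*} [Field k] {n : ℕ} {hn : 2 ≤ n} {ε : Aq k n →ₐ[k] k} {L : ℕ}

open scoped Classical in
/-- The membership proof sits inside a `dite`, so that `basValue g (mS (mS v))` rewrites to
`basValue g v`. -/
noncomputable def basValue (g : Pmod k n hn L →ₗ[(Aq k n)ᵐᵒᵖ] KE k n ε) (v : Mat n) (j i : Fin n) :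
    KE k n ε :=
  if hv : v ∈ V n then g (bas k n hn L v hv j i 1) else 0

theorem basValue_of_mem (g : Pmod k n hn L →ₗ[(Aq k n)ᵐᵒᵖ] KE k n ε) {v : Mat n}
    (hv : v ∈ V n) : basValue g v = fun j i => g (bas k n hn L v hv j i 1) :=
  funext₂ fun _ _ => dif_pos hv

theorem apply_bas (g : Pmod k n hn L →ₗ[(Aq k n)ᵐᵒᵖ] KE k n ε) {v : Mat n} (hv : v ∈ V n)
    (j i : Fin n) (a : Aq k n) :
    g (bas k n hn L v hv j i a) = ε a • g (bas k n hn L v hv j i 1) := by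
  rw [show bas k n hn L v hv j i a = MulOpposite.op a • bas k n hn L v hv j i 1 by
    simp [bas, Finsupp.smul_single], map_smul]
  rfl

theorem apply_bas_neg_one_pow (g : Pmod k n hn L →ₗ[(Aq k n)ᵐᵒᵖ] KE k n ε) {v : Mat n}
    (hv : v ∈ V n) (m : ℕ) (j i : Fin n) :
    g (bas k n hn L v hv j i ((-1) ^ m)) = (-1 : k) ^ m • g (bas k n hn L v hv j i 1) := by
  rw [apply_bas, map_pow, map_neg, map_one]

variable {v w : Mat n}

theorem apply_bas_gen (hε : ∀ v ∈ V n, ∀ j i : Fin n, ε (gen k v j i) = if j = i then 1 else 0)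
    (g : Pmod k n hn L →ₗ[(Aq k n)ᵐᵒᵖ] KE k n ε) (hv : v ∈ V n) (hw : w ∈ V n) (j i s t : Fin n) :
    g (bas k n hn L v hv j i (gen k w s t)) = if s = t then g (bas k n hn L v hv j i 1) else 0 := by
  rw [apply_bas, hε w hw, ite_smul, one_smul, zero_smul]

theorem apply_sum_bas_gen
    (hε : ∀ v ∈ V n, ∀ j i : Fin n, ε (gen k v j i) = if j = i then 1 else 0)
    (g : Pmod k n hn L →ₗ[(Aq k n)ᵐᵒᵖ] KE k n ε) (hv : v ∈ V n) (hw : w ∈ V n) (j i : Fin n) :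
    g (∑ s, bas k n hn L v hv j s (gen k w s i)) = g (bas k n hn L v hv j i 1) := by
  simp [apply_bas_gen hε g hv hw]

theorem eq_zero_iff_forall_bas {N : Type*} [AddCommGroup N] [Module (Aq k n)ᵐᵒᵖ N]
    (f : Pmod k n hn L →ₗ[(Aq k n)ᵐᵒᵖ] N) :
    f = 0 ↔ ∀ (v : Mat n) (hv : v ∈ V n) (j i : Fin n), f (bas k n hn L v hv j i 1) = 0 := by
  refine ⟨fun h _ _ _ _ => by rw [h, LinearMap.zero_apply], fun h => ?_⟩
  refine Finsupp.lhom_ext' fun ⟨w, v, hv, j, i, hw⟩ => LinearMap.ext_ring_op ?_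
  subst hw
  exact h v hv j i

theorem apply_dTail_rev (hε : ∀ v ∈ V n, ∀ j i : Fin n, ε (gen k v j i) = if j = i then 1 else 0)
    (l : ℕ) (g : Pmod k n hn (l - 1) →ₗ[(Aq k n)ᵐᵒᵖ] KE k n ε) (hv : v ∈ V n) (j i : Fin n) :
    g (dTail k n hn l v hv j i.rev) =
      pairedTerm l hn ((-1 : k) ^ l) (basValue g v) (basValue g (mD v)) (basValue g (mT v))
          (basValue g (mS v)) j i
        - (if j = finN n hn ∧ i = fin1 n hn then
            basValue g (mT v) (fin1 n hn) (finN n hn)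
              + (-1 : k) ^ l • basValue g (mS v) (finN n hn) (fin1 n hn)
          else 0) := by
  rw [basValue_of_mem g hv, basValue_of_mem g (V_mT hv), basValue_of_mem g (V_mS hv),
    basValue_of_mem g (V_mD hv)]
  simp only [dTail, pairedTerm, diagSum, Fin.rev_rev, rev_eq_finN_iff, map_add, map_sub g,
    apply_ite g, map_zero, map_sum, apply_sum_bas_gen hε g hv (pw_mem hv),
    apply_sum_bas_gen hε g (V_mT hv) (pw_mem (V_mT hv)),
    apply_bas_gen hε g (V_mT hv) (pw_mem (V_mT hv)), apply_bas_neg_one_pow]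
  have h1N := fin1_ne_finN hn
  by_cases hj : j = finN n hn <;> by_cases hi : i = finN n hn
  all_goals simp [hj, hi, h1N.symm, smul_add, Finset.smul_sum, sub_eq_add_neg]

theorem comp_eq_zero_iff_forall_cocycleEqs
    (hε : ∀ v ∈ V n, ∀ j i : Fin n, ε (gen k v j i) = if j = i then 1 else 0) (l : ℕ)
    (dl : Pmod k n hn l →ₗ[(Aq k n)ᵐᵒᵖ] Pmod k n hn (l - 1))
    (hdl : ∀ (v : Mat n) (hv : v ∈ V n) (j i : Fin n),
      dl (bas k n hn l v hv j i 1) = dTail k n hn l v hv j i)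
    (g : Pmod k n hn (l - 1) →ₗ[(Aq k n)ᵐᵒᵖ] KE k n ε) :
    g.comp dl = 0 ↔ ∀ v ∈ V n, CocycleEqs l hn ((-1 : k) ^ l) (basValue g v) (basValue g (mT v))
      (basValue g (mS v)) (basValue g (mD v)) := by
  rw [eq_zero_iff_forall_bas]
  refine forall_congr' fun v => forall_congr' fun hv => ?_
  simp only [CocycleEqs, ← apply_dTail_rev hε l g hv, LinearMap.comp_apply, hdl]
  exact forall_congr' fun j => Fin.rev_surjective.forall

theorem cond16_iff (l : ℕ) (g : Pmod k n hn (l - 1) →ₗ[(Aq k n)ᵐᵒᵖ] KE k n ε)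
    (hv : v ∈ V n) :
    cond16 k hn ε l g v hv ↔ Cond16Eqs l hn ((-1 : k) ^ l) (basValue g v) (basValue g (mT v))
      (basValue g (mS v)) (basValue g (mD v)) := by
  rw [basValue_of_mem g hv, basValue_of_mem g (V_mT hv), basValue_of_mem g (V_mS hv),
    basValue_of_mem g (V_mD hv)]
  rfl

end Cochains

theorem comp_eq_zero_iff_cond16 {k : Type*} [Field k] {n : ℕ} {hn : 2 ≤ n}
    {ε : Aq k n →ₐ[k] k} (hε : ∀ v ∈ V n, ∀ j i : Fin n, ε (gen k v j i) = if j = i then 1 else 0)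
    (l : ℕ) (dl : Pmod k n hn l →ₗ[(Aq k n)ᵐᵒᵖ] Pmod k n hn (l - 1))
    (hdl : ∀ (v : Mat n) (hv : v ∈ V n) (j i : Fin n),
      dl (bas k n hn l v hv j i 1) = dTail k n hn l v hv j i)
    (g : Pmod k n hn (l - 1) →ₗ[(Aq k n)ᵐᵒᵖ] KE k n ε) {v : Mat n} (hv : v ∈ V n) :
    g.comp dl = 0 ↔ cond16 k hn ε l g v hv := by
  have he : (-1 : k) ^ l * (-1) ^ l = 1 := by rw [← mul_pow, neg_one_mul, neg_neg, one_pow]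
  rw [comp_eq_zero_iff_forall_cocycleEqs hε l dl hdl, V_eq_of_mem hv]
  simp only [Set.forall_mem_insert, Set.mem_singleton_iff, forall_eq, mT_mT, mS_mT, mD_mT, mT_mS,
    mT_mD, mS_mS, mD_mD, mS_mD, mD_mS]
  rw [cocycleEqs_four_iff he, cond16_iff, cond16Eqs_iff he]

theorem statement_16_general (k : Type*) [Field k] (n : ℕ) (hn : 2 ≤ n)
    (ε : Aq k n →ₐ[k] k)
    (hε : ∀ v ∈ V n, ∀ j i : Fin n, ε (gen k v j i) = if j = i then 1 else 0)
    (l : ℕ)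
    (dl : Pmod k n hn l →ₗ[(Aq k n)ᵐᵒᵖ] Pmod k n hn (l - 1))
    (hdl : ∀ (v : Mat n) (hv : v ∈ V n) (j i : Fin n),
      dl (bas k n hn l v hv j i 1) = dTail k n hn l v hv j i)
    (g : Pmod k n hn (l - 1) →ₗ[(Aq k n)ᵐᵒᵖ] KE k n ε) :
    (g.comp dl = 0 ↔ ∀ (v : Mat n) (hv : v ∈ V n), cond16 k hn ε l g v hv) ∧
      ∀ (v : Mat n) (hv : v ∈ V n), cond16 k hn ε l g v hv →
        ∀ (w : Mat n) (hw : w ∈ V n), cond16 k hn ε l g w hw := by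
  have key := fun {v} (hv : v ∈ V n) => comp_eq_zero_iff_cond16 hε l dl hdl g hv
  have hu : uMat n ∈ V n := Set.mem_insert _ _
  exact ⟨⟨fun h v hv => (key hv).1 h, fun h => (key hu).2 (h _ hu)⟩,
    fun v hv hc w hw => (key hw).1 ((key hv).2 hc)⟩

theorem statement_16 (k : Type*) [Field k] (n : ℕ) (hn : 2 ≤ n)
    (ε : Aq k n →ₐ[k] k)
    (hε : ∀ v ∈ V n, ∀ j i : Fin n, ε (gen k v j i) = if j = i then 1 else 0)
    (l : ℕ) (hl : 3 ≤ l)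
    (dl : Pmod k n hn l →ₗ[(Aq k n)ᵐᵒᵖ] Pmod k n hn (l - 1))
    (hdl : ∀ (v : Mat n) (hv : v ∈ V n) (j i : Fin n),
      dl (bas k n hn l v hv j i 1) = dTail k n hn l v hv j i)
    (g : Pmod k n hn (l - 1) →ₗ[(Aq k n)ᵐᵒᵖ] KE k n ε) :
    (g.comp dl = 0 ↔ ∀ (v : Mat n) (hv : v ∈ V n), cond16 k hn ε l g v hv) ∧
      ∀ (v : Mat n) (hv : v ∈ V n), cond16 k hn ε l g v hv →
        ∀ (w : Mat n) (hw : w ∈ V n), cond16 k hn ε l g w hw :=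
  statement_16_general k n hn ε hε l dl hdl g

end UnPlusAnick
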